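/- arXiv:nlin/0106029 — 5 statements merged into one kernel-verified Lean document; each statement's English description precedes it below -/
import Mathlib

section
/- Let x_{kj} (k=1,...,m, j ∈ ℤ with x_{k,j+n}=x_{kj}) be nonzero elements of a field, set P_{kj} = Σ_{a=1}^{n} (Π_{l=1}^{a-1} x_{k,j+l}) (Π_{l=a+1}^{n} x_{k+1,j+l}), and h_k = Π_{j=1}^{n} x_{kj}. Then for all k and j, x_{k+1,j} P_{k,j−1} − x_{kj} P_{kj} = h_{k+1} − h_k. -/
open Finset

private lemma auxSucc {F : Type*} [CommMonoid F] (a b : ℕ) (g : ℕ → F) :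
    ∏ l ∈ Icc (a + 1) (b + 1), g l = ∏ l ∈ Icc a b, g (l + 1) := by
  rw [← Finset.map_add_right_Icc a b 1, Finset.prod_map]
  rfl

private lemma auxSuccSum {F : Type*} [AddCommMonoid F] (a b : ℕ) (g : ℕ → F) :
    ∑ l ∈ Icc (a + 1) (b + 1), g l = ∑ l ∈ Icc a b, g (l + 1) := by
  rw [← Finset.map_add_right_Icc a b 1, Finset.sum_map]
  rfl

private lemma auxCast (n : ℕ) [NeZero n] {F : Type*} [CommMonoid F] (g : ZMod n → F) :
    ∏ l ∈ Icc 1 n, g (l : ZMod n) = ∏ z : ZMod n, g z := by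
  have hn : 0 < n := Nat.pos_of_ne_zero (NeZero.ne n)
  refine Finset.prod_bij' (fun l _ => (l : ZMod n))
    (fun z _ => if z = 0 then n else z.val) ?_ ?_ ?_ ?_ ?_
  · intro l _; exact Finset.mem_univ _
  · intro z _
    by_cases hz : z = 0
    · rw [if_pos hz, mem_Icc]; omega
    · have h1 : z.val ≠ 0 := by simpa [ZMod.val_eq_zero] using hz
      have h2 : z.val < n := ZMod.val_lt z
      rw [if_neg hz, mem_Icc]; omega
  · intro l hl
    simp only [mem_Icc] at hl
    rcases eq_or_lt_of_le hl.2 with h | h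
    · subst h; simp [ZMod.natCast_self]
    · have hv : ((l : ZMod n)).val = l := ZMod.val_cast_of_lt h
      have hne : (l : ZMod n) ≠ 0 := by
        intro h0; rw [h0, ZMod.val_zero] at hv; omega
      simp [hne, hv]
  · intro z _
    by_cases hz : z = 0
    · simp [hz, ZMod.natCast_self]
    · simp [hz, ZMod.natCast_val, ZMod.cast_id]
  · intro l _; rfl

private lemma auxShift (n : ℕ) [NeZero n] {F : Type*} [CommMonoid F] (g : ZMod n → F)
    (c : ZMod n) : ∏ l ∈ Icc 1 n, g (c + (l : ZMod n)) = ∏ z : ZMod n, g z := by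
  rw [auxCast n (fun z => g (c + z))]
  exact Fintype.prod_equiv (Equiv.addLeft c) _ _ (fun z => rfl)

private lemma telescope (n : ℕ) (hn : 0 < n) {F : Type*} [CommRing F] (f g : ℕ → F)
    (hfg : ∀ a ∈ Icc 1 (n - 1), f (a + 1) = g a) :
    (∑ a ∈ Icc 1 n, f a) - (∑ a ∈ Icc 1 n, g a) = f 1 - g n := by
  have hn1 : n = (n - 1) + 1 := (Nat.succ_pred_eq_of_pos hn).symm
  have h1 : ∑ a ∈ Icc 1 n, f a = f 1 + ∑ a ∈ Icc 2 n, f a := by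
    rw [Finset.Icc_eq_cons_Ioc hn, Finset.sum_cons, ← Finset.Icc_add_one_left_eq_Ioc]
    rfl
  have h2 : ∑ a ∈ Icc 2 n, f a = ∑ a ∈ Icc 1 (n - 1), f (a + 1) := by
    rw [show Icc 2 n = Icc (1 + 1) ((n - 1) + 1) by rw [← hn1], auxSuccSum]
  have h3 : ∑ a ∈ Icc 1 n, g a = (∑ a ∈ Icc 1 (n - 1), g a) + g n := by
    rw [show Icc 1 n = Icc 1 ((n - 1) + 1) by rw [← hn1],
      Finset.sum_Icc_succ_top (by omega), ← hn1]
  rw [h1, h2, Finset.sum_congr rfl hfg, h3]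
  ring

/-- the identity `x_{k+1,j} P_{k,j−1} − x_{kj} P_{kj} = h_{k+1} − h_k`
for doubly periodic variables `x : ZMod m → ZMod n → F`. -/
theorem stmt1 (m n : ℕ) (hm : 0 < m) (hn : 0 < n) (F : Type*) [Field F]
    (x : ZMod m → ZMod n → F) (hx : ∀ k j, x k j ≠ 0)
    (P : ZMod m → ZMod n → F)
    (hP : ∀ k j, P k j =
      ∑ a ∈ Icc 1 n, (∏ l ∈ Icc 1 (a - 1), x k (j + (l : ZMod n))) *
        ∏ l ∈ Icc (a + 1) n, x (k + 1) (j + (l : ZMod n)))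
    (h : ZMod m → F) (hh : ∀ k, h k = ∏ j ∈ Icc 1 n, x k ((j : ZMod n))) :
    ∀ (k : ZMod m) (j : ZMod n),
      x (k + 1) j * P k (j - 1) - x k j * P k j = h (k + 1) - h k := by
  haveI : NeZero n := ⟨hn.ne'⟩
  intro k j
  have hn1 : n = (n - 1) + 1 := (Nat.succ_pred_eq_of_pos hn).symm
  set x0 := x k with hx0
  set x1 := x (k + 1) with hx1
  rw [hP, hP, hh, hh, Finset.mul_sum, Finset.mul_sum]
  have key : ∀ a ∈ Icc 1 (n - 1),
      x1 j * ((∏ l ∈ Icc 1 (a + 1 - 1), x0 (j - 1 + (l : ZMod n))) *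
        ∏ l ∈ Icc (a + 1 + 1) n, x1 (j - 1 + (l : ZMod n)))
      = x0 j * ((∏ l ∈ Icc 1 (a - 1), x0 (j + (l : ZMod n))) *
        ∏ l ∈ Icc (a + 1) n, x1 (j + (l : ZMod n))) := by
    intro a ha
    simp only [mem_Icc] at ha
    have e1 : ∏ l ∈ Icc 1 (a + 1 - 1), x0 (j - 1 + (l : ZMod n))
        = x0 j * ∏ l ∈ Icc 1 (a - 1), x0 (j + (l : ZMod n)) := by
      rw [show Icc 1 (a + 1 - 1) = Icc (0 + 1) ((a - 1) + 1) by congr 1; omega, auxSucc,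
        Finset.Icc_eq_cons_Ioc (Nat.zero_le _), Finset.prod_cons, ← Finset.Icc_add_one_left_eq_Ioc]
      congr 1
      · congr 1; push_cast; ring
      · apply Finset.prod_congr rfl
        intro l _; congr 1; push_cast; ring
    have e2 : ∏ l ∈ Icc (a + 1 + 1) n, x1 (j - 1 + (l : ZMod n))
        = ∏ l ∈ Icc (a + 1) (n - 1), x1 (j + (l : ZMod n)) := by
      rw [show Icc (a + 1 + 1) n = Icc ((a + 1) + 1) ((n - 1) + 1) by rw [← hn1], auxSucc]
      apply Finset.prod_congr rfl
      intro l _; congr 1; push_cast; ring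
    have e3 : ∏ l ∈ Icc (a + 1) n, x1 (j + (l : ZMod n))
        = (∏ l ∈ Icc (a + 1) (n - 1), x1 (j + (l : ZMod n))) * x1 j := by
      rw [show Icc (a + 1) n = Icc (a + 1) ((n - 1) + 1) by rw [← hn1],
        Finset.prod_Icc_succ_top (by omega)]
      congr 1
      rw [show ((n - 1 + 1 : ℕ) : ZMod n) = ((n : ℕ) : ZMod n) by rw [← hn1]]
      simp [ZMod.natCast_self]
    rw [e1, e2, e3]
    ring
  rw [telescope n hn _ _ key]
  congr 1
  · -- f 1 = h (k+1)
    have e4 : ∏ l ∈ Icc (1 + 1) n, x1 (j - 1 + (l : ZMod n))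
        = ∏ l ∈ Icc 1 (n - 1), x1 (j + (l : ZMod n)) := by
      rw [show Icc (1 + 1) n = Icc (1 + 1) ((n - 1) + 1) by rw [← hn1], auxSucc]
      apply Finset.prod_congr rfl
      intro l _; congr 1; push_cast; ring
    rw [e4, show ∏ j' ∈ Icc 1 n, x1 (j' : ZMod n) = ∏ z : ZMod n, x1 z from auxCast n _,
      ← auxShift n x1 j,
      show Icc 1 n = Icc 1 ((n - 1) + 1) by rw [← hn1],
      Finset.prod_Icc_succ_top (by omega),
      show ((n - 1 + 1 : ℕ) : ZMod n) = ((n : ℕ) : ZMod n) by rw [← hn1]]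
    simp only [ZMod.natCast_self, add_zero]
    rw [show Icc 1 (1 - 1) = (∅ : Finset ℕ) from Finset.Icc_eq_empty_of_lt (by norm_num),
      Finset.prod_empty, one_mul]
    ring
  · -- g n = h k
    rw [show Icc (n + 1) n = (∅ : Finset ℕ) from Finset.Icc_eq_empty_of_lt (by omega),
      Finset.prod_empty, mul_one,
      show ∏ j' ∈ Icc 1 n, x0 (j' : ZMod n) = ∏ z : ZMod n, x0 z from auxCast n _,
      ← auxShift n x0 j,
      show Icc 1 n = Icc 1 ((n - 1) + 1) by rw [← hn1],
      Finset.prod_Icc_succ_top (by omega),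
      show ((n - 1 + 1 : ℕ) : ZMod n) = ((n : ℕ) : ZMod n) by rw [← hn1]]
    simp only [ZMod.natCast_self, add_zero]
    ring
end

section
/- Let K = ℂ(x₁,x₂,x₃,y₁,y₂,y₃) be the rational function field in six variables. Define the field automorphism s₁ by s₁(x₁)=x₂(x₁+y₂)/(x₂+y₁), s₁(x₂)=x₁(x₂+y₁)/(x₁+y₂), s₁(x₃)=x₃, s₁(y₁)=y₂(x₂+y₁)/(x₁+y₂), s₁(y₂)=y₁(x₁+y₂)/(x₂+y₁), s₁(y₃)=y₃. Then s₁ is an involution: s₁∘s₁ = id. -/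
set_option maxHeartbeats 1000000
set_option synthInstance.maxHeartbeats 400000

noncomputable section

/-- The rational function field `ℂ(x₁,x₂,x₃,y₁,y₂,y₃)`. -/
abbrev K : Type := FractionRing (MvPolynomial (Fin 6) ℂ)

/-- The generators of `K`. -/
def X (i : Fin 6) : K := algebraMap (MvPolynomial (Fin 6) ℂ) K (MvPolynomial.X i)

def x1 : K := X 0
def x2 : K := X 1
def x3 : K := X 2
def y1 : K := X 3
def y2 : K := X 4
def y3 : K := X 5

lemma Xadd_ne (i j : Fin 6) (hij : i ≠ j) : X i + X j ≠ 0 := by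
  intro h
  unfold X at h
  rw [← map_add, ← map_zero (algebraMap (MvPolynomial (Fin 6) ℂ) K)] at h
  have h0 := IsFractionRing.injective (MvPolynomial (Fin 6) ℂ) K h
  have := congrArg (MvPolynomial.eval (fun k => if k = i then (1:ℂ) else 0)) h0
  simp [hij.symm] at this

/-- the Bäcklund transformation `s₁` is an involution of
`K = ℂ(x₁,x₂,x₃,y₁,y₂,y₃)`. -/
theorem stmt2 (s : K ≃ₐ[ℂ] K)
    (h1 : s x1 = x2 * (x1 + y2) / (x2 + y1))
    (h2 : s x2 = x1 * (x2 + y1) / (x1 + y2))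
    (h3 : s x3 = x3)
    (h4 : s y1 = y2 * (x2 + y1) / (x1 + y2))
    (h5 : s y2 = y1 * (x1 + y2) / (x2 + y1))
    (h6 : s y3 = y3) :
    ∀ k : K, s (s k) = k := by
  have hA : x2 + y1 ≠ 0 := Xadd_ne 1 3 (by decide)
  have hB : x1 + y2 ≠ 0 := Xadd_ne 0 4 (by decide)
  have hfixB : s (x1 + y2) = x1 + y2 := by
    rw [map_add, h1, h5]; field_simp
  have hfixA : s (x2 + y1) = x2 + y1 := by
    rw [map_add, h2, h4]; field_simp
  have ss1 : s (s x1) = x1 := by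
    rw [h1, map_div₀, map_mul, h2, hfixA, hfixB]; field_simp
  have ss2 : s (s x2) = x2 := by
    rw [h2, map_div₀, map_mul, h1, hfixA, hfixB]; field_simp
  have ss3 : s (s x3) = x3 := by rw [h3, h3]
  have ss4 : s (s y1) = y1 := by
    rw [h4, map_div₀, map_mul, h5, hfixA, hfixB]; field_simp
  have ss5 : s (s y2) = y2 := by
    rw [h5, map_div₀, map_mul, h4, hfixA, hfixB]; field_simp
  have ss6 : s (s y3) = y3 := by rw [h6, h6]
  have key : ∀ p : MvPolynomial (Fin 6) ℂ,
      s (s (algebraMap (MvPolynomial (Fin 6) ℂ) K p))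
        = algebraMap (MvPolynomial (Fin 6) ℂ) K p := by
    have hhom : ((s.toAlgHom.comp s.toAlgHom).comp
        (IsScalarTower.toAlgHom ℂ (MvPolynomial (Fin 6) ℂ) K))
        = IsScalarTower.toAlgHom ℂ (MvPolynomial (Fin 6) ℂ) K := by
      apply MvPolynomial.algHom_ext
      intro i
      simp only [AlgHom.comp_apply, IsScalarTower.coe_toAlgHom',
        AlgEquiv.toAlgHom_eq_coe, AlgHom.coe_coe]
      fin_cases i
      · exact ss1
      · exact ss2
      · exact ss3
      · exact ss4
      · exact ss5
      · exact ss6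
    intro p
    exact congrArg (fun f => f p) (congrArg DFunLike.coe hhom)
  intro k
  obtain ⟨p, q, hq, rfl⟩ := IsFractionRing.div_surjective (A := MvPolynomial (Fin 6) ℂ) k
  rw [map_div₀, map_div₀, key, key]
end
end

section
/- Let K = ℂ(x₁,x₂,x₃,y₁,y₂,y₃), and define r₁ by r₁(xᵢ) = yᵢ P_{i−1}/P_i and r₁(yᵢ) = xᵢ P_i/P_{i−1} (indices mod 3), where P₁ = x₂x₃+x₂y₁+y₃y₁, P₂ = x₃x₁+x₃y₂+y₁y₂, P₃ = x₁x₂+x₁y₃+y₂y₃. Then r₁ is an involution of K. -/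
set_option maxHeartbeats 1000000


noncomputable section

def P1 : K := x2 * x3 + x2 * y1 + y3 * y1
def P2 : K := x3 * x1 + x3 * y2 + y1 * y2
def P3 : K := x1 * x2 + x1 * y3 + y2 * y3

lemma poly_ne (i j k l : Fin 6) : X i * X j + X i * X k + X l * X k ≠ 0 := by
  have h : X i * X j + X i * X k + X l * X k = algebraMap (MvPolynomial (Fin 6) ℂ) K
      (MvPolynomial.X i * MvPolynomial.X j + MvPolynomial.X i * MvPolynomial.X k
        + MvPolynomial.X l * MvPolynomial.X k) := by
    simp only [X, RingHom.map_add, RingHom.map_mul]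
  rw [h, ne_eq, map_eq_zero_iff _ (IsFractionRing.injective (MvPolynomial (Fin 6) ℂ) K)]
  intro hc
  have h2 := congrArg (MvPolynomial.eval (fun _ => (1:ℂ))) hc
  simp at h2
  exact absurd h2 (by norm_num)

lemma hP1 : P1 ≠ 0 := poly_ne 1 2 3 5
lemma hP2 : P2 ≠ 0 := poly_ne 2 0 4 3
lemma hP3 : P3 ≠ 0 := poly_ne 0 1 5 4


/-- the transformation `r₁`, given by `r₁(xᵢ) = yᵢ P_{i−1}/P_i`,
`r₁(yᵢ) = xᵢ P_i/P_{i−1}` (indices mod 3, so `P₀ = P₃`), is an involution of `K`. -/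
theorem stmt4 (r : K ≃ₐ[ℂ] K)
    (h1 : r x1 = y1 * P3 / P1)
    (h2 : r x2 = y2 * P1 / P2)
    (h3 : r x3 = y3 * P2 / P3)
    (h4 : r y1 = x1 * P1 / P3)
    (h5 : r y2 = x2 * P2 / P1)
    (h6 : r y3 = x3 * P3 / P2) :
    ∀ k : K, r (r k) = k := by
  have hp1 := hP1; have hp2 := hP2; have hp3 := hP3
  simp only [P1, P2, P3] at h1 h2 h3 h4 h5 h6 hp1 hp2 hp3
  have rP1 : r (x2 * x3 + x2 * y1 + y3 * y1) = x2 * x3 + x2 * y1 + y3 * y1 := by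
    rw [map_add, map_add, map_mul, map_mul, map_mul, h2, h3, h4, h6]
    generalize ha : x2 * x3 + x2 * y1 + y3 * y1 = a at *
    generalize hb : x3 * x1 + x3 * y2 + y1 * y2 = b at *
    generalize hc : x1 * x2 + x1 * y3 + y2 * y3 = c at *
    field_simp
    subst ha hb hc
    ring
  have rP2 : r (x3 * x1 + x3 * y2 + y1 * y2) = x3 * x1 + x3 * y2 + y1 * y2 := by
    rw [map_add, map_add, map_mul, map_mul, map_mul, h3, h1, h5, h4]
    generalize ha : x2 * x3 + x2 * y1 + y3 * y1 = a at *
    generalize hb : x3 * x1 + x3 * y2 + y1 * y2 = b at *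
    generalize hc : x1 * x2 + x1 * y3 + y2 * y3 = c at *
    field_simp
    subst ha hb hc
    ring
  have rP3 : r (x1 * x2 + x1 * y3 + y2 * y3) = x1 * x2 + x1 * y3 + y2 * y3 := by
    rw [map_add, map_add, map_mul, map_mul, map_mul, h1, h2, h6, h5]
    generalize ha : x2 * x3 + x2 * y1 + y3 * y1 = a at *
    generalize hb : x3 * x1 + x3 * y2 + y1 * y2 = b at *
    generalize hc : x1 * x2 + x1 * y3 + y2 * y3 = c at *
    field_simp
    subst ha hb hc
    ring
  have key : ∀ i : Fin 6, r (r (X i)) = X i := by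
    intro i
    fin_cases i
    · show r (r x1) = x1
      rw [h1, map_div₀, map_mul, h4, rP3, rP1]
      generalize x2 * x3 + x2 * y1 + y3 * y1 = a at *
      generalize x3 * x1 + x3 * y2 + y1 * y2 = b at *
      generalize x1 * x2 + x1 * y3 + y2 * y3 = c at *
      field_simp
    · show r (r x2) = x2
      rw [h2, map_div₀, map_mul, h5, rP1, rP2]
      generalize x2 * x3 + x2 * y1 + y3 * y1 = a at *
      generalize x3 * x1 + x3 * y2 + y1 * y2 = b at *
      generalize x1 * x2 + x1 * y3 + y2 * y3 = c at *
      field_simp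
    · show r (r x3) = x3
      rw [h3, map_div₀, map_mul, h6, rP2, rP3]
      generalize x2 * x3 + x2 * y1 + y3 * y1 = a at *
      generalize x3 * x1 + x3 * y2 + y1 * y2 = b at *
      generalize x1 * x2 + x1 * y3 + y2 * y3 = c at *
      field_simp
    · show r (r y1) = y1
      rw [h4, map_div₀, map_mul, h1, rP1, rP3]
      generalize x2 * x3 + x2 * y1 + y3 * y1 = a at *
      generalize x3 * x1 + x3 * y2 + y1 * y2 = b at *
      generalize x1 * x2 + x1 * y3 + y2 * y3 = c at *
      field_simp
    · show r (r y2) = y2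
      rw [h5, map_div₀, map_mul, h2, rP2, rP1]
      generalize x2 * x3 + x2 * y1 + y3 * y1 = a at *
      generalize x3 * x1 + x3 * y2 + y1 * y2 = b at *
      generalize x1 * x2 + x1 * y3 + y2 * y3 = c at *
      field_simp
    · show r (r y3) = y3
      rw [h6, map_div₀, map_mul, h3, rP3, rP2]
      generalize x2 * x3 + x2 * y1 + y3 * y1 = a at *
      generalize x3 * x1 + x3 * y2 + y1 * y2 = b at *
      generalize x1 * x2 + x1 * y3 + y2 * y3 = c at *
      field_simp
  have hcomp : ((r.toAlgHom.comp r.toAlgHom : K →ₐ[ℂ] K) : K →+* K) = RingHom.id K := by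
    apply IsLocalization.ringHom_ext (nonZeroDivisors (MvPolynomial (Fin 6) ℂ))
    apply MvPolynomial.ringHom_ext
    · intro a
      have ha : (algebraMap (MvPolynomial (Fin 6) ℂ) K) (MvPolynomial.C a)
          = algebraMap ℂ K a := (IsScalarTower.algebraMap_apply ℂ _ K a).symm
      simp [ha]
    · intro i
      simpa [X] using key i
  intro k
  have := RingHom.congr_fun hcomp k
  simpa using this
end
end

section
/- Let K = ℂ(x₁,x₂,x₃,y₁,y₂,y₃) with the automorphisms s₁ (defined by s₁(x₁)=x₂(x₁+y₂)/(x₂+y₁), s₁(x₂)=x₁(x₂+y₁)/(x₁+y₂), s₁(x₃)=x₃, s₁(y₁)=y₂(x₂+y₁)/(x₁+y₂), s₁(y₂)=y₁(x₁+y₂)/(x₂+y₁), s₁(y₃)=y₃) and r₁ (defined by r₁(xᵢ)=yᵢP_{i−1}/P_i, r₁(yᵢ)=xᵢP_i/P_{i−1} where P₁=x₂x₃+x₂y₁+y₃y₁, P₂=x₃x₁+x₃y₂+y₁y₂, P₃=x₁x₂+x₁y₃+y₂y₃, indices mod 3). Then r₁ ∘ s₁ = s₁ ∘ r₁. -/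
noncomputable section

set_option maxHeartbeats 4000000
set_option synthInstance.maxHeartbeats 400000
set_option maxRecDepth 8000
set_option linter.unusedVariables false

private lemma amap_ne (p : MvPolynomial (Fin 6) ℂ)
    (h : MvPolynomial.eval (fun _ => (1:ℂ)) p ≠ 0) :
    algebraMap (MvPolynomial (Fin 6) ℂ) K p ≠ 0 := by
  intro h0
  have : p = 0 := (IsFractionRing.to_map_eq_zero_iff (K := K)).mp h0
  exact h (by simp [this])

private lemma h1ne : x2 + y1 ≠ 0 := by
  rw [x2, y1, X, X, ← map_add]; exact amap_ne _ (by norm_num)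

private lemma h2ne : x1 + y2 ≠ 0 := by
  rw [x1, y2, X, X, ← map_add]; exact amap_ne _ (by norm_num)

private lemma hP1ne : x2 * x3 + x2 * y1 + y3 * y1 ≠ 0 := by
  rw [x2, x3, y1, y3, X, X, X, X, ← map_mul, ← map_mul, ← map_mul, ← map_add, ← map_add]
  exact amap_ne _ (by norm_num)

private lemma hP2ne : x3 * x1 + x3 * y2 + y1 * y2 ≠ 0 := by
  rw [x3, x1, y2, y1, X, X, X, X, ← map_mul, ← map_mul, ← map_mul, ← map_add, ← map_add]
  exact amap_ne _ (by norm_num)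

private lemma hP3ne : x1 * x2 + x1 * y3 + y2 * y3 ≠ 0 := by
  rw [x1, x2, y3, y2, X, X, X, X, ← map_mul, ← map_mul, ← map_mul, ← map_add, ← map_add]
  exact amap_ne _ (by norm_num)

private lemma case1 (s r : K ≃ₐ[ℂ] K)
    (hs1 : s x1 = x2 * (x1 + y2) / (x2 + y1))
    (hs2 : s x2 = x1 * (x2 + y1) / (x1 + y2))
    (hs3 : s x3 = x3)
    (hs4 : s y1 = y2 * (x2 + y1) / (x1 + y2))
    (hs5 : s y2 = y1 * (x1 + y2) / (x2 + y1))
    (hs6 : s y3 = y3)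
    (hr1 : r x1 = y1 * P3 / P1)
    (hr2 : r x2 = y2 * P1 / P2)
    (hr3 : r x3 = y3 * P2 / P3)
    (hr4 : r y1 = x1 * P1 / P3)
    (hr5 : r y2 = x2 * P2 / P1)
    (hr6 : r y3 = x3 * P3 / P2) :
    r (s x1) = s (r x1) := by
  have h1 := h1ne
  have h2 := h2ne
  have hP1 := hP1ne
  have hP2 := hP2ne
  have hP3 := hP3ne
  have hrD : r x2 + r y1 ≠ 0 := by
    rw [← map_add]; exact fun h => h1ne (r.injective (h.trans (map_zero r).symm))
  have hsD : s P1 ≠ 0 := fun h =>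
    hP1ne (by have := s.injective (h.trans (map_zero s).symm); rwa [P1] at this)
  simp only [hs1, hs2, hs3, hs4, hs5, hs6, hr1, hr2, hr3, hr4, hr5, hr6,
    P1, P2, P3, map_div₀, map_mul, map_add] at hrD hsD ⊢
  field_simp (disch := grind) at hrD hsD ⊢
  ring1

private lemma case2 (s r : K ≃ₐ[ℂ] K)
    (hs1 : s x1 = x2 * (x1 + y2) / (x2 + y1))
    (hs2 : s x2 = x1 * (x2 + y1) / (x1 + y2))
    (hs3 : s x3 = x3)
    (hs4 : s y1 = y2 * (x2 + y1) / (x1 + y2))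
    (hs5 : s y2 = y1 * (x1 + y2) / (x2 + y1))
    (hs6 : s y3 = y3)
    (hr1 : r x1 = y1 * P3 / P1)
    (hr2 : r x2 = y2 * P1 / P2)
    (hr3 : r x3 = y3 * P2 / P3)
    (hr4 : r y1 = x1 * P1 / P3)
    (hr5 : r y2 = x2 * P2 / P1)
    (hr6 : r y3 = x3 * P3 / P2) :
    r (s x2) = s (r x2) := by
  have h1 := h1ne
  have h2 := h2ne
  have hP1 := hP1ne
  have hP2 := hP2ne
  have hP3 := hP3ne
  have hrD : r x1 + r y2 ≠ 0 := by
    rw [← map_add]; exact fun h => h2ne (r.injective (h.trans (map_zero r).symm))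
  have hsD : s P2 ≠ 0 := fun h =>
    hP2ne (by have := s.injective (h.trans (map_zero s).symm); rwa [P2] at this)
  simp only [hs1, hs2, hs3, hs4, hs5, hs6, hr1, hr2, hr3, hr4, hr5, hr6,
    P1, P2, P3, map_div₀, map_mul, map_add] at hrD hsD ⊢
  field_simp (disch := grind) at hrD hsD ⊢
  ring1

private lemma case3 (s r : K ≃ₐ[ℂ] K)
    (hs1 : s x1 = x2 * (x1 + y2) / (x2 + y1))
    (hs2 : s x2 = x1 * (x2 + y1) / (x1 + y2))
    (hs3 : s x3 = x3)
    (hs4 : s y1 = y2 * (x2 + y1) / (x1 + y2))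
    (hs5 : s y2 = y1 * (x1 + y2) / (x2 + y1))
    (hs6 : s y3 = y3)
    (hr1 : r x1 = y1 * P3 / P1)
    (hr2 : r x2 = y2 * P1 / P2)
    (hr3 : r x3 = y3 * P2 / P3)
    (hr4 : r y1 = x1 * P1 / P3)
    (hr5 : r y2 = x2 * P2 / P1)
    (hr6 : r y3 = x3 * P3 / P2) :
    r (s x3) = s (r x3) := by
  have h1 := h1ne
  have h2 := h2ne
  have hP1 := hP1ne
  have hP2 := hP2ne
  have hP3 := hP3ne
  have hsD : s P3 ≠ 0 := fun h =>
    hP3ne (by have := s.injective (h.trans (map_zero s).symm); rwa [P3] at this)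
  simp only [hs1, hs2, hs3, hs4, hs5, hs6, hr1, hr2, hr3, hr4, hr5, hr6,
    P1, P2, P3, map_div₀, map_mul, map_add] at hsD ⊢
  field_simp (disch := grind) at hsD ⊢
  ring1

private lemma case4 (s r : K ≃ₐ[ℂ] K)
    (hs1 : s x1 = x2 * (x1 + y2) / (x2 + y1))
    (hs2 : s x2 = x1 * (x2 + y1) / (x1 + y2))
    (hs3 : s x3 = x3)
    (hs4 : s y1 = y2 * (x2 + y1) / (x1 + y2))
    (hs5 : s y2 = y1 * (x1 + y2) / (x2 + y1))
    (hs6 : s y3 = y3)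
    (hr1 : r x1 = y1 * P3 / P1)
    (hr2 : r x2 = y2 * P1 / P2)
    (hr3 : r x3 = y3 * P2 / P3)
    (hr4 : r y1 = x1 * P1 / P3)
    (hr5 : r y2 = x2 * P2 / P1)
    (hr6 : r y3 = x3 * P3 / P2) :
    r (s y1) = s (r y1) := by
  have h1 := h1ne
  have h2 := h2ne
  have hP1 := hP1ne
  have hP2 := hP2ne
  have hP3 := hP3ne
  have hrD : r x1 + r y2 ≠ 0 := by
    rw [← map_add]; exact fun h => h2ne (r.injective (h.trans (map_zero r).symm))
  have hsD : s P3 ≠ 0 := fun h =>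
    hP3ne (by have := s.injective (h.trans (map_zero s).symm); rwa [P3] at this)
  simp only [hs1, hs2, hs3, hs4, hs5, hs6, hr1, hr2, hr3, hr4, hr5, hr6,
    P1, P2, P3, map_div₀, map_mul, map_add] at hrD hsD ⊢
  field_simp (disch := grind) at hrD hsD ⊢
  ring1

private lemma case5 (s r : K ≃ₐ[ℂ] K)
    (hs1 : s x1 = x2 * (x1 + y2) / (x2 + y1))
    (hs2 : s x2 = x1 * (x2 + y1) / (x1 + y2))
    (hs3 : s x3 = x3)
    (hs4 : s y1 = y2 * (x2 + y1) / (x1 + y2))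
    (hs5 : s y2 = y1 * (x1 + y2) / (x2 + y1))
    (hs6 : s y3 = y3)
    (hr1 : r x1 = y1 * P3 / P1)
    (hr2 : r x2 = y2 * P1 / P2)
    (hr3 : r x3 = y3 * P2 / P3)
    (hr4 : r y1 = x1 * P1 / P3)
    (hr5 : r y2 = x2 * P2 / P1)
    (hr6 : r y3 = x3 * P3 / P2) :
    r (s y2) = s (r y2) := by
  have h1 := h1ne
  have h2 := h2ne
  have hP1 := hP1ne
  have hP2 := hP2ne
  have hP3 := hP3ne
  have hrD : r x2 + r y1 ≠ 0 := by
    rw [← map_add]; exact fun h => h1ne (r.injective (h.trans (map_zero r).symm))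
  have hsD : s P1 ≠ 0 := fun h =>
    hP1ne (by have := s.injective (h.trans (map_zero s).symm); rwa [P1] at this)
  simp only [hs1, hs2, hs3, hs4, hs5, hs6, hr1, hr2, hr3, hr4, hr5, hr6,
    P1, P2, P3, map_div₀, map_mul, map_add] at hrD hsD ⊢
  field_simp (disch := grind) at hrD hsD ⊢
  ring1

private lemma case6 (s r : K ≃ₐ[ℂ] K)
    (hs1 : s x1 = x2 * (x1 + y2) / (x2 + y1))
    (hs2 : s x2 = x1 * (x2 + y1) / (x1 + y2))
    (hs3 : s x3 = x3)
    (hs4 : s y1 = y2 * (x2 + y1) / (x1 + y2))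
    (hs5 : s y2 = y1 * (x1 + y2) / (x2 + y1))
    (hs6 : s y3 = y3)
    (hr1 : r x1 = y1 * P3 / P1)
    (hr2 : r x2 = y2 * P1 / P2)
    (hr3 : r x3 = y3 * P2 / P3)
    (hr4 : r y1 = x1 * P1 / P3)
    (hr5 : r y2 = x2 * P2 / P1)
    (hr6 : r y3 = x3 * P3 / P2) :
    r (s y3) = s (r y3) := by
  have h1 := h1ne
  have h2 := h2ne
  have hP1 := hP1ne
  have hP2 := hP2ne
  have hP3 := hP3ne
  have hsD : s P2 ≠ 0 := fun h =>
    hP2ne (by have := s.injective (h.trans (map_zero s).symm); rwa [P2] at this)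
  simp only [hs1, hs2, hs3, hs4, hs5, hs6, hr1, hr2, hr3, hr4, hr5, hr6,
    P1, P2, P3, map_div₀, map_mul, map_add] at hsD ⊢
  field_simp (disch := grind) at hsD ⊢
  ring1

/-- the transformations `r₁` and `s₁` commute: `r₁ ∘ s₁ = s₁ ∘ r₁`. -/
theorem stmt5 (s r : K ≃ₐ[ℂ] K)
    (hs1 : s x1 = x2 * (x1 + y2) / (x2 + y1))
    (hs2 : s x2 = x1 * (x2 + y1) / (x1 + y2))
    (hs3 : s x3 = x3)
    (hs4 : s y1 = y2 * (x2 + y1) / (x1 + y2))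
    (hs5 : s y2 = y1 * (x1 + y2) / (x2 + y1))
    (hs6 : s y3 = y3)
    (hr1 : r x1 = y1 * P3 / P1)
    (hr2 : r x2 = y2 * P1 / P2)
    (hr3 : r x3 = y3 * P2 / P3)
    (hr4 : r y1 = x1 * P1 / P3)
    (hr5 : r y2 = x2 * P2 / P1)
    (hr6 : r y3 = x3 * P3 / P2) :
    ∀ k : K, r (s k) = s (r k) := by
  have hgen : ∀ i : Fin 6, r (s (X i)) = s (r (X i)) := by
    intro i
    fin_cases i
    · exact case1 s r hs1 hs2 hs3 hs4 hs5 hs6 hr1 hr2 hr3 hr4 hr5 hr6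
    · exact case2 s r hs1 hs2 hs3 hs4 hs5 hs6 hr1 hr2 hr3 hr4 hr5 hr6
    · exact case3 s r hs1 hs2 hs3 hs4 hs5 hs6 hr1 hr2 hr3 hr4 hr5 hr6
    · exact case4 s r hs1 hs2 hs3 hs4 hs5 hs6 hr1 hr2 hr3 hr4 hr5 hr6
    · exact case5 s r hs1 hs2 hs3 hs4 hs5 hs6 hr1 hr2 hr3 hr4 hr5 hr6
    · exact case6 s r hs1 hs2 hs3 hs4 hs5 hs6 hr1 hr2 hr3 hr4 hr5 hr6
  have H : ((r : K →+* K).comp (s : K →+* K)) = ((s : K →+* K).comp (r : K →+* K)) := by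
    apply IsLocalization.ringHom_ext (nonZeroDivisors (MvPolynomial (Fin 6) ℂ))
    apply MvPolynomial.ringHom_ext
    · intro a
      simp only [RingHom.comp_apply, RingHom.coe_coe]
      rw [show (algebraMap (MvPolynomial (Fin 6) ℂ) K) (MvPolynomial.C a) = algebraMap ℂ K a from
        (IsScalarTower.algebraMap_apply ℂ (MvPolynomial (Fin 6) ℂ) K a).symm]
      simp
    · intro i
      simpa [X] using hgen i
  intro k
  exact DFunLike.congr_fun H k
end
end

section
/- Let x₁,...,x_m, y₁,...,y_m be elements of a field, all nonzero, and define x'ᵢ, y'ᵢ by the relations x'ᵢ y'ᵢ = xᵢ yᵢ and x'ᵢ + y'_{i+1} = xᵢ + y_{i+1} (indices mod m). Then for the matrices A(x) with diagonal x₁,...,x_m, superdiagonal 1, and corner entry z, the relations x'ᵢy'ᵢ = xᵢyᵢ and x'ᵢ + y'_{i+1} = xᵢ + y_{i+1} for all i imply A(x')A(y') = A(x)A(y). -/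
/-!
Write `A(u) = diag(u) + S`, where `S` is the off-diagonal part, which does not depend on `u`.
Then `A(x) A(y) = diag(xᵢ yᵢ) + ((xᵢ + yⱼ) Sᵢⱼ)ᵢⱼ + S²`, and `S` is supported on the entries
`(i, i + 1)`, so the product depends on `x, y` only through `xᵢ yᵢ` and `xᵢ + yᵢ₊₁`.
-/

open Matrix Polynomial

namespace Matrix

variable {n α : Type*} [DecidableEq n]

theorem of_ite_eq_diagonal_add [AddZeroClass α] (σ : n → n) (hσ : ∀ i, σ i ≠ i) (a b : n → α) :
    of (fun i j => if i = j then a i else if j = σ i then b i else 0) =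
      diagonal a + of (fun i j => if j = σ i then b i else 0) := by
  ext i j
  by_cases hij : i = j
  · subst hij
    simp [Ne.symm (hσ i)]
  · simp [hij]

variable [Fintype n] [CommSemiring α]

theorem diagonal_add_mul_diagonal_add (d e : n → α) (S : Matrix n n α) :
    (diagonal d + S) * (diagonal e + S) =
      diagonal (d * e) + of (fun i j => (d i + e j) * S i j) + S * S := by
  ext i j
  simp only [add_mul, mul_add, diagonal_mul_diagonal, add_apply, diagonal_mul, mul_diagonal,
    of_apply, diagonal_apply, Pi.mul_apply]
  ring

theorem diagonal_add_mul_diagonal_add_eq {d e d' e' : n → α} (S : Matrix n n α)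
    (hprod : d' * e' = d * e) (hsum : ∀ i j, S i j ≠ 0 → d' i + e' j = d i + e j) :
    (diagonal d' + S) * (diagonal e' + S) = (diagonal d + S) * (diagonal e + S) := by
  rw [diagonal_add_mul_diagonal_add, diagonal_add_mul_diagonal_add, hprod]
  congr 3
  ext i j
  by_cases hS : S i j = 0
  · simp [hS]
  · rw [hsum i j hS]

end Matrix

theorem stmt9_general (m : ℕ) [NeZero m] (hm : 2 ≤ m) (R : Type*) [Field R]
    (x y x' y' : ZMod m → R)
    (A : (ZMod m → R) → Matrix (ZMod m) (ZMod m) (Polynomial R))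
    (hA : ∀ (u : ZMod m → R) (i j : ZMod m), A u i j =
      if i = j then Polynomial.C (u i)
      else if j = i + 1 then (if i = -1 then Polynomial.X else 1)
      else 0)
    (hprod : ∀ i, x' i * y' i = x i * y i)
    (hsum : ∀ i, x' i + y' (i + 1) = x i + y (i + 1)) :
    A x' * A y' = A x * A y := by
  have : Fact (1 < m) := ⟨hm⟩
  set S : Matrix (ZMod m) (ZMod m) R[X] :=
    of fun i j => if j = i + 1 then (if i = -1 then X else 1) else 0
  have hA' (u : ZMod m → R) : A u = diagonal (fun i => C (u i)) + S := by
    rw [← of_ite_eq_diagonal_add (· + 1) (fun i => by simp)]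
    exact Matrix.ext (hA u)
  simp only [hA']
  apply diagonal_add_mul_diagonal_add_eq
  · funext i
    simp only [Pi.mul_apply, ← map_mul, hprod]
  · intro i j hij
    obtain rfl : j = i + 1 := by
      by_contra h
      simp [S, h] at hij
    simp only [← map_add, hsum]

/-- the entrywise relations `x'ᵢ y'ᵢ = xᵢ yᵢ` and
`x'ᵢ + y'_{i+1} = xᵢ + y_{i+1}` (indices mod m) imply the matrix identity
`A(x')A(y') = A(x)A(y)`, where `A(x)` is the m×m matrix over `R[z]` with diagonal
`xᵢ`, superdiagonal `1` and corner entry `z = Polynomial.X`. -/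
theorem stmt9 (m : ℕ) [NeZero m] (hm : 2 ≤ m) (R : Type*) [Field R]
    (x y x' y' : ZMod m → R)
    (hx : ∀ i, x i ≠ 0) (hy : ∀ i, y i ≠ 0)
    (hx' : ∀ i, x' i ≠ 0) (hy' : ∀ i, y' i ≠ 0)
    (A : (ZMod m → R) → Matrix (ZMod m) (ZMod m) (Polynomial R))
    (hA : ∀ (u : ZMod m → R) (i j : ZMod m), A u i j =
      if i = j then Polynomial.C (u i)
      else if j = i + 1 then (if i = -1 then Polynomial.X else 1)
      else 0)
    (hprod : ∀ i, x' i * y' i = x i * y i)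
    (hsum : ∀ i, x' i + y' (i + 1) = x i + y (i + 1)) :
    A x' * A y' = A x * A y :=
  stmt9_general m hm R x y x' y' A hA hprod hsum
end
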